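/- For every nonempty metric space (X,d), the tight span T(X) with the metric d_T(f,g) = sup_{x ∈ X} |f(x) − g(x)| is hyperconvex: for every family of points (f_i) in T(X) and radii (r_i ≥ 0) with d_T(f_i, f_j) ≤ r_i + r_j for all i, j, the closed balls of radius r_i around f_i in T(X) have a common point. -/
import Mathlib


/-- The tight span of a metric space `X`. -/
def TightSpan (X : Type*) [MetricSpace X] : Set (X → ℝ) :=
  {f | (∀ x y, dist x y ≤ f x + f y) ∧ ∀ x, (⨅ y, (f x + f y - dist x y)) = 0}

lemma exists_minimal_of_chains_bddBelow {α : Type*} [Preorder α] (s : Set α)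
    (ih : ∀ c ⊆ s, IsChain (· ≤ ·) c → ∃ lb ∈ s, ∀ z ∈ c, lb ≤ z) :
    ∃ m ∈ s, ∀ z ∈ s, z ≤ m → m ≤ z := by
  obtain ⟨m, hm⟩ := @zorn_le₀ αᵒᵈ _ s (fun c hcs hc => by
    have hc' : IsChain (fun a b : α => a ≤ b) c :=
      fun a ha b hb hab => (hc ha hb hab).symm
    obtain ⟨lb, hlbs, hlb⟩ := ih c hcs hc'
    exact ⟨lb, hlbs, fun z hz => hlb z hz⟩)
  exact ⟨m, hm.1, fun z hz hzm => hm.2 hz hzm⟩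

section Aux

variable {X : Type*} [MetricSpace X] [Nonempty X]

lemma ts_exists {f : X → ℝ} (hf : f ∈ TightSpan X) (x : X) {ε : ℝ} (hε : 0 < ε) :
    ∃ y, f x + f y - dist x y < ε := by
  have h2 := hf.2 x
  have : (⨅ y, (f x + f y - dist x y)) < ε := by rw [h2]; exact hε
  exact exists_lt_of_ciInf_lt this

omit [Nonempty X] in
lemma ts_lower {f : X → ℝ} (hf : f ∈ TightSpan X) (x y : X) :
    dist x y - f y ≤ f x := by
  have := hf.1 x y
  linarith

lemma ts_lip {f : X → ℝ} (hf : f ∈ TightSpan X) (x y : X) :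
    f x ≤ f y + dist x y := by
  have key : ∀ ε > 0, f x ≤ f y + dist x y + ε := by
    intro ε hε
    obtain ⟨z, hz⟩ := ts_exists hf x hε
    have h1 : dist x z ≤ dist x y + dist y z := dist_triangle x y z
    have h2 : dist y z - f z ≤ f y := ts_lower hf y z
    linarith
  exact le_of_forall_pos_le_add fun ε hε => by
    have := key ε hε; linarith

end Aux

theorem stmt12 {X : Type*} [MetricSpace X] [Nonempty X] {ι : Type*}
    (p : ι → (X → ℝ)) (hp : ∀ i, p i ∈ TightSpan X)
    (r : ι → ℝ) (hr : ∀ i, 0 ≤ r i)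
    (h : ∀ i j, (⨆ x, |p i x - p j x|) ≤ r i + r j) :
    ∃ f ∈ TightSpan X, ∀ i, (⨆ x, |f x - p i x|) ≤ r i := by
  classical
  obtain ⟨x₀⟩ := ‹Nonempty X›
  rcases isEmpty_or_nonempty ι with hι | hι
  · -- empty index: take the distance function from x₀
    refine ⟨fun x => dist x₀ x, ⟨fun x y => ?_, fun x => ?_⟩, fun i => isEmptyElim i⟩
    · calc dist x y ≤ dist x x₀ + dist x₀ y := dist_triangle x x₀ y
        _ = dist x₀ x + dist x₀ y := by rw [dist_comm]
    · apply le_antisymm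
      · have hb : BddBelow (Set.range fun y => dist x₀ x + dist x₀ y - dist x y) := by
          refine ⟨0, ?_⟩
          rintro _ ⟨y, rfl⟩
          show (0:ℝ) ≤ dist x₀ x + dist x₀ y - dist x y
          have : dist x y ≤ dist x x₀ + dist x₀ y := dist_triangle x x₀ y
          rw [dist_comm x x₀] at this
          linarith
        have := ciInf_le hb x₀
        simpa [dist_comm] using this
      · apply le_ciInf
        intro y
        have : dist x y ≤ dist x x₀ + dist x₀ y := dist_triangle x x₀ y
        rw [dist_comm x x₀] at this
        linarith
  · -- nonempty index
    obtain ⟨i₀⟩ := hι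
    haveI : Nonempty ι := ⟨i₀⟩
    -- pointwise bound from the sup hypothesis
    have hpt : ∀ i j x, |p i x - p j x| ≤ r i + r j := by
      intro i j x
      refine le_trans ?_ (h i j)
      apply le_ciSup (f := fun x => |p i x - p j x|)
      refine ⟨p i x₀ + p j x₀, ?_⟩
      rintro _ ⟨y, rfl⟩
      show |p i y - p j y| ≤ p i x₀ + p j x₀
      have h1 : p i y ≤ p i x₀ + dist y x₀ := ts_lip (hp i) y x₀
      have h2 : p j y ≤ p j x₀ + dist y x₀ := ts_lip (hp j) y x₀
      have h3 : dist y x₀ - p i x₀ ≤ p i y := ts_lower (hp i) y x₀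
      have h4 : dist y x₀ - p j x₀ ≤ p j y := ts_lower (hp j) y x₀
      rw [abs_le]; constructor <;> linarith
    have hpt' : ∀ i j x, p j x - r j ≤ p i x + r i := by
      intro i j x
      have := hpt i j x
      rw [abs_le] at this
      linarith [this.1]
    -- the set S of admissible functions
    set S : Set (X → ℝ) :=
      {f | (∀ x y, dist x y ≤ f x + f y) ∧ ∀ i x, f x ≤ p i x + r i} with hS
    -- g = inf (p i + r i) is in S
    have hbg : ∀ x, BddBelow (Set.range fun i => p i x + r i) := by
      intro x
      refine ⟨p i₀ x - r i₀, ?_⟩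
      rintro _ ⟨i, rfl⟩
      exact hpt' i i₀ x
    set g : X → ℝ := fun x => ⨅ i, (p i x + r i) with hg
    have hgS : g ∈ S := by
      constructor
      · intro x y
        rw [← sub_le_iff_le_add']
        apply le_ciInf
        intro j
        rw [sub_le_iff_le_add]
        have hx : dist x y - (p j y + r j) ≤ g x := by
          apply le_ciInf
          intro i
          have h1 : dist x y ≤ p i x + p i y := (hp i).1 x y
          have h2 := hpt i j y
          rw [abs_le] at h2
          have := h2.1
          linarith
        linarith
      · intro i x
        exact ciInf_le (hbg x) i
    -- lower bound for members of S
    have hSlb : ∀ f ∈ S, ∀ x, dist x x₀ - (p i₀ x₀ + r i₀) ≤ f x := by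
      intro f hf x
      have h1 : dist x x₀ ≤ f x + f x₀ := hf.1 x x₀
      have h2 : f x₀ ≤ p i₀ x₀ + r i₀ := hf.2 i₀ x₀
      linarith
    -- a minimal element of S exists
    obtain ⟨f, hfS, hfmin⟩ := exists_minimal_of_chains_bddBelow S (by
      intro c hcS hc
      rcases c.eq_empty_or_nonempty with rfl | hcne
      · exact ⟨g, hgS, fun z hz => absurd hz (Set.notMem_empty z)⟩
      · have : Nonempty c := hcne.to_subtype
        set m : X → ℝ := fun x => ⨅ f : c, (f : X → ℝ) x with hm
        have hbm : ∀ x, BddBelow (Set.range fun f : c => (f : X → ℝ) x) := by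
          intro x
          refine ⟨dist x x₀ - (p i₀ x₀ + r i₀), ?_⟩
          rintro _ ⟨⟨f, hf⟩, rfl⟩
          exact hSlb f (hcS hf) x
        have hmle : ∀ f ∈ c, ∀ x, m x ≤ f x := by
          intro f hf x
          exact ciInf_le (hbm x) ⟨f, hf⟩
        refine ⟨m, ⟨?_, ?_⟩, ?_⟩
        · intro x y
          rw [← sub_le_iff_le_add']
          apply le_ciInf
          rintro ⟨f', hf'⟩
          show dist x y - m x ≤ f' y
          have hx : dist x y - f' y ≤ m x := by
            apply le_ciInf
            rintro ⟨f'', hf''⟩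
            show dist x y - f' y ≤ f'' x
            rcases eq_or_ne f' f'' with rfl | hne
            · have := (hcS hf').1 x y; linarith
            · rcases hc hf' hf'' hne with hle | hle
              · have h2 := (hcS hf').1 x y
                have h3 := hle x
                linarith
              · have h2 := (hcS hf'').1 x y
                have h3 := hle y
                linarith
          linarith
        · intro i x
          obtain ⟨f', hf'⟩ := hcne
          exact le_trans (hmle f' hf' x) ((hcS hf').2 i x)
        · intro z hz
          exact fun x => hmle z hz x)
    have hmin : ∀ z ∈ S, (∀ x, z x ≤ f x) → ∀ x, f x ≤ z x := by
      intro z hz hzf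
      exact hfmin z hz (fun x => hzf x)
    -- f is in the tight span
    have hfT : f ∈ TightSpan X := by
      refine ⟨hfS.1, fun x => ?_⟩
      have hb0 : BddBelow (Set.range fun y => f x + f y - dist x y) := by
        refine ⟨0, ?_⟩
        rintro _ ⟨y, rfl⟩
        show (0:ℝ) ≤ f x + f y - dist x y
        have := hfS.1 x y
        linarith
      have hnn : 0 ≤ ⨅ y, (f x + f y - dist x y) := by
        apply le_ciInf
        intro y
        have := hfS.1 x y
        linarith
      by_contra hne
      have hpos : 0 < ⨅ y, (f x + f y - dist x y) := lt_of_le_of_ne hnn (Ne.symm hne)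
      set ε : ℝ := ⨅ y, (f x + f y - dist x y) with hε
      have hkey : ∀ y, ε ≤ f x + f y - dist x y := fun y => ciInf_le hb0 y
      set f' : X → ℝ := fun z => if z = x then f x - ε / 2 else f z with hf'
      have hf'le : ∀ z, f' z ≤ f z := by
        intro z
        simp only [hf']
        split
        · rename_i hz; subst hz; linarith
        · exact le_rfl
      have hf'S : f' ∈ S := by
        constructor
        · intro y z
          have hky := hkey y
          have hkz := hkey z
          have hkx := hkey x
          simp only [hf']
          split <;> split <;> rename_i h1 h2
          · subst h1; subst h2
            simp only [dist_self] at hkx ⊢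
            linarith
          · subst h1
            linarith
          · subst h2
            rw [dist_comm]
            linarith
          · exact hfS.1 y z
        · intro i z
          exact le_trans (hf'le z) (hfS.2 i z)
      have := hmin f' hf'S hf'le x
      simp only [hf', if_pos rfl] at this
      linarith
    refine ⟨f, hfT, fun i => ?_⟩
    apply ciSup_le
    intro x
    rw [abs_le]
    constructor
    · -- -(r i) ≤ f x - p i x, i.e. p i x - r i ≤ f x
      have hkey : ∀ ε > 0, p i x - r i ≤ f x + ε := by
        intro ε hε
        obtain ⟨y, hy⟩ := ts_exists (hp i) x hε
        have h1 : dist x y ≤ f x + f y := hfS.1 x y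
        have h2 : f y ≤ p i y + r i := hfS.2 i y
        linarith
      have := le_of_forall_pos_le_add hkey
      linarith
    · have := hfS.2 i x
      linarith
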